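/- arXiv:2605.27456 — 2 statements merged into one kernel-verified Lean document; each statement's English description precedes it below -/
import Mathlib

section
/- Let f be a linear map on symmetric p×p real matrices satisfying f(C S C) = C f(S) C for every positive diagonal matrix C and every symmetric S. Then there exists a symmetric matrix A such that f(S) = A ⊙ S (entrywise Hadamard product) for all symmetric S. -/
/-!
Conjugating the symmetrised matrix unit `symmSingle i j = single i j 1 + single j i 1` by
`diagonal c` multiplies it by `c i * c j`, so by equivariance conjugation by a positive
diagonal matrix also multiplies `f (symmSingle i j)` by `c i * c j`. Comparing the factors
`c i * c j` and `c k * c l` for `c` equal to `2` at one index and `1` elsewhere shows that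
`f (symmSingle i j)` vanishes off the entries `(i, j)` and `(j, i)`; being symmetric, it is a
multiple `A i j • symmSingle i j`. As `∑ i, ∑ j, S i j • symmSingle i j = S + Sᵀ`, linearity
gives `2 • f S = 2 • (A ⊙ S)` for symmetric `S`.
-/

open Matrix

namespace Matrix

variable {n R : Type*} [DecidableEq n]

section Semiring

variable [CommSemiring R]

def symmSingle (i j : n) : Matrix n n R := single i j 1 + single j i 1

theorem symmSingle_comm (i j : n) : (symmSingle i j : Matrix n n R) = symmSingle j i :=
  add_comm _ _

theorem isSymm_symmSingle (i j : n) : (symmSingle i j : Matrix n n R).IsSymm := by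
  simp [symmSingle, IsSymm, transpose_add, transpose_single, add_comm]

theorem symmSingle_apply_eq_zero {i j k l : n} (h : ¬(k = i ∧ l = j ∨ k = j ∧ l = i)) :
    (symmSingle i j : Matrix n n R) k l = 0 := by
  simp only [symmSingle, add_apply, single_apply]
  rw [if_neg (by tauto), if_neg (by tauto), add_zero]

theorem symmSingle_ne_zero [CharZero R] (i j : n) : (symmSingle i j : Matrix n n R) ≠ 0 := by
  intro h
  have := congrFun₂ h i j
  by_cases hij : i = j <;> simp [symmSingle, hij, one_add_one_eq_two] at this

theorem sum_smul_symmSingle [Fintype n] (S : Matrix n n R) :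
    ∑ i, ∑ j, S i j • symmSingle i j = S + Sᵀ := by
  simp only [symmSingle, smul_add, smul_single, smul_eq_mul, mul_one, Finset.sum_add_distrib]
  rw [Finset.sum_comm (f := fun i j => single j i (S i j)), ← matrix_eq_sum_single S]
  exact congrArg (S + ·) (matrix_eq_sum_single Sᵀ).symm

theorem diagonal_mul_single_mul_diagonal {m : Type*} [DecidableEq m] [Fintype m] [Fintype n]
    (c : m → R) (d : n → R) (i : m) (j : n) (a : R) :
    diagonal c * single i j a * diagonal d = single i j (c i * a * d j) := by
  ext k l
  by_cases hk : i = k <;> by_cases hl : j = l <;> simp [single, mul_diagonal, diagonal_mul, *]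

theorem diagonal_mul_symmSingle_mul_diagonal [Fintype n] (c : n → R) (i j : n) :
    diagonal c * symmSingle i j * diagonal c = (c i * c j) • symmSingle i j := by
  simp only [symmSingle, Matrix.mul_add, Matrix.add_mul, diagonal_mul_single_mul_diagonal,
    smul_add, smul_single, smul_eq_mul]
  congr 2 <;> ring

theorem map_add_transpose_of_map_symmSingle [Fintype n]
    (f : Matrix n n R →ₗ[R] Matrix n n R) (A : Matrix n n R)
    (hf : ∀ i j, f (symmSingle i j) = A i j • symmSingle i j) (S : Matrix n n R) :
    f (S + Sᵀ) = A ⊙ S + (A ⊙ S)ᵀ := by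
  simp only [← sum_smul_symmSingle, map_sum, map_smul, hf, smul_smul, hadamard_apply, mul_comm]

end Semiring

section OrderedRing

variable [Fintype n] [CommRing R] [LinearOrder R] [IsStrictOrderedRing R]

theorem eq_or_eq_of_diagonal_mul_mul_diagonal_eq_smul {M : Matrix n n R} {i j : n}
    (hM : ∀ c : n → R, (∀ m, 0 < c m) → diagonal c * M * diagonal c = (c i * c j) • M)
    {k l : n} (hkl : M k l ≠ 0) : k = i ∧ l = j ∨ k = j ∧ l = i := by
  have weights : ∀ m, ((if i = m then 2 else 1 : R) * if j = m then 2 else 1) =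
      (if k = m then 2 else 1) * if l = m then 2 else 1 := by
    intro m
    have h := congrFun₂ (hM (fun x => if x = m then 2 else 1) fun x => by positivity) k l
    simp only [mul_diagonal, diagonal_mul, smul_apply, smul_eq_mul] at h
    exact mul_right_cancel₀ hkl (by linear_combination h.symm)
  have hk := weights k
  have hl := weights l
  split_ifs at hk hl <;> subst_vars <;> first | tauto | linarith

end OrderedRing

section Field

variable [Fintype n] [Field R] [LinearOrder R] [IsStrictOrderedRing R]

theorem exists_eq_smul_symmSingle {M : Matrix n n R} (hMs : M.IsSymm) {i j : n}
    (hM : ∀ c : n → R, (∀ m, 0 < c m) → diagonal c * M * diagonal c = (c i * c j) • M) :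
    ∃ a : R, M = a • symmSingle i j := by
  have hsupp : ∀ k l, ¬(k = i ∧ l = j ∨ k = j ∧ l = i) → M k l = 0 := fun k l =>
    not_imp_comm.1 (eq_or_eq_of_diagonal_mul_mul_diagonal_eq_smul hM)
  obtain rfl | hij := eq_or_ne i j
  · refine ⟨M i i / 2, ?_⟩
    ext k l
    by_cases h : k = i ∧ l = i
    · obtain ⟨rfl, rfl⟩ := h
      simp only [symmSingle, smul_apply, add_apply, single_apply_same, smul_eq_mul]
      ring
    · rw [hsupp k l (by tauto), smul_apply, symmSingle_apply_eq_zero (by tauto), smul_zero]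
  · refine ⟨M i j, ?_⟩
    ext k l
    by_cases h : k = i ∧ l = j ∨ k = j ∧ l = i
    · rcases h with ⟨rfl, rfl⟩ | ⟨rfl, rfl⟩ <;> simp [symmSingle, hij, hij.symm, hMs.apply]
    · rw [hsupp k l h, smul_apply, symmSingle_apply_eq_zero h, smul_zero]

end Field

end Matrix

/-- A linear map on symmetric p×p real matrices that is equivariant under
congruence by positive diagonal matrices, f(C S C) = C f(S) C, is a Schur
(Hadamard) multiplier: f(S) = A ⊙ S for some fixed symmetric A. -/
theorem diagonal_equivariant_linear_is_schur (p : ℕ)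
    (f : Matrix (Fin p) (Fin p) ℝ →ₗ[ℝ] Matrix (Fin p) (Fin p) ℝ)
    (hsymm : ∀ S : Matrix (Fin p) (Fin p) ℝ, S.IsSymm → (f S).IsSymm)
    (hequiv : ∀ (c : Fin p → ℝ), (∀ i, 0 < c i) →
      ∀ S : Matrix (Fin p) (Fin p) ℝ, S.IsSymm →
        f (Matrix.diagonal c * S * Matrix.diagonal c) =
          Matrix.diagonal c * f S * Matrix.diagonal c) :
    ∃ A : Matrix (Fin p) (Fin p) ℝ, A.IsSymm ∧
      ∀ S : Matrix (Fin p) (Fin p) ℝ, S.IsSymm → f S = Matrix.hadamard A S := by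
  have hE : ∀ i j, ∃ a : ℝ, f (symmSingle i j) = a • symmSingle i j := fun i j =>
    exists_eq_smul_symmSingle (hsymm _ (isSymm_symmSingle i j)) fun c hc => by
      rw [← hequiv c hc _ (isSymm_symmSingle i j), diagonal_mul_symmSingle_mul_diagonal, map_smul]
  choose a ha using hE
  have hA : (of a).IsSymm := by
    ext i j
    have hji := ha j i
    rw [symmSingle_comm j i] at hji
    exact smul_left_injective ℝ (symmSingle_ne_zero i j) (hji.symm.trans (ha i j))
  refine ⟨of a, hA, fun S hS => smul_right_injective _ (two_ne_zero (α := ℝ)) ?_⟩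
  calc (2 : ℝ) • f S = f (S + Sᵀ) := by rw [hS.eq, ← two_smul ℝ S, map_smul]
    _ = of a ⊙ S + (of a ⊙ S)ᵀ := map_add_transpose_of_map_symmSingle f (of a) ha S
    _ = (2 : ℝ) • (of a ⊙ S) := by rw [transpose_hadamard, hA.eq, hS.eq, two_smul]
end

section
/- Uniqueness of IPCA: let f be a linear map on symmetric p×p matrices such that (i) f(C S C) = C f(S) C for all positive diagonal C, (ii) f(S) is diagonal for every symmetric positive definite S, and (iii) f(I) = I. Then f(S) = diag(S_{11}, ..., S_{pp}) for every symmetric positive definite S; i.e., f is the diagonal extractor. -/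
open Matrix

/-- Uniqueness of IPCA: a linear map f on symmetric p×p matrices satisfying
(i) f(C S C) = C f(S) C for all positive diagonal C, (ii) f(S) diagonal for every
symmetric positive definite S, and (iii) f(I) = I, is the diagonal extractor
f(S) = diag(S₁₁,…,S_pp) on symmetric positive definite matrices. -/
theorem ipca_uniqueness (p : ℕ)
    (f : Matrix (Fin p) (Fin p) ℝ →ₗ[ℝ] Matrix (Fin p) (Fin p) ℝ)
    (hequiv : ∀ (c : Fin p → ℝ), (∀ i, 0 < c i) →
      ∀ S : Matrix (Fin p) (Fin p) ℝ, S.IsSymm →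
        f (Matrix.diagonal c * S * Matrix.diagonal c) =
          Matrix.diagonal c * f S * Matrix.diagonal c)
    (hdiag : ∀ S : Matrix (Fin p) (Fin p) ℝ, S.IsSymm → S.PosDef → (f S).IsDiag)
    (hnorm : f 1 = 1) :
    ∀ S : Matrix (Fin p) (Fin p) ℝ, S.IsSymm → S.PosDef →
      f S = Matrix.diagonal (fun i => S i i) := by
  -- Step 1: f fixes diagonal matrices with positive entries
  have fdiag_pos : ∀ d : Fin p → ℝ, (∀ i, 0 < d i) →
      f (Matrix.diagonal d) = Matrix.diagonal d := by
    intro d hd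
    have hc : ∀ i, 0 < Real.sqrt (d i) := fun i => Real.sqrt_pos.2 (hd i)
    have h := hequiv (fun i => Real.sqrt (d i)) hc 1 Matrix.isSymm_one
    have hsq : Matrix.diagonal (fun i => Real.sqrt (d i)) *
        Matrix.diagonal (fun i => Real.sqrt (d i)) = Matrix.diagonal d := by
      have he : (fun i => Real.sqrt (d i) * Real.sqrt (d i)) = d :=
        funext fun i => Real.mul_self_sqrt (hd i).le
      rw [Matrix.diagonal_mul_diagonal, he]
    rw [Matrix.mul_one, hnorm, Matrix.mul_one, hsq] at h
    exact h
  -- Step 1': f fixes all diagonal matrices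
  have fdiag : ∀ d : Fin p → ℝ, f (Matrix.diagonal d) = Matrix.diagonal d := by
    intro d
    set a : ℝ := 1 + ∑ i, |d i| with ha
    have hsum : ∀ i, |d i| ≤ ∑ j, |d j| := fun i =>
      Finset.single_le_sum (fun j _ => abs_nonneg (d j)) (Finset.mem_univ i)
    have hpos : ∀ i, 0 < d i + a := by
      intro i
      have h1 := hsum i
      have h2 := neg_abs_le (d i)
      simp only [ha]
      linarith
    have hapos : ∀ i : Fin p, 0 < (fun _ : Fin p => a) i := by
      intro i
      have : (0:ℝ) ≤ ∑ j, |d j| := Finset.sum_nonneg (fun j _ => abs_nonneg (d j))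
      simp only [ha]
      linarith
    have h1 := fdiag_pos (fun i => d i + a) hpos
    have h2 := fdiag_pos (fun _ => a) hapos
    have hadd : Matrix.diagonal (fun i => d i + a) =
        Matrix.diagonal d + Matrix.diagonal (fun _ => a) := by
      rw [← Matrix.diagonal_add]
    rw [hadd, map_add, h2] at h1
    exact add_right_cancel h1
  intro S hS hPD
  set D : Matrix (Fin p) (Fin p) ℝ := Matrix.diagonal (fun i => S i i) with hD
  set R : Matrix (Fin p) (Fin p) ℝ := S - D with hR
  have hRsymm : R.IsSymm := by
    unfold Matrix.IsSymm
    rw [hR, Matrix.transpose_sub, hS, hD, Matrix.diagonal_transpose]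
  have hRkk : ∀ k, R k k = 0 := by
    intro k
    simp [hR, hD, Matrix.sub_apply, Matrix.diagonal_apply_eq]
  have hfR : f R = f S - D := by
    rw [hR, map_sub, fdiag]
  have hfRdiag : (f R).IsDiag := by
    rw [hfR]
    exact (hdiag S hS hPD).sub (Matrix.isDiag_diagonal _)
  -- Step 2: diagonal entries of f R vanish
  have hkk : ∀ k, f R k k = 0 := by
    intro k
    set A : Matrix (Fin p) (Fin p) ℝ :=
      Matrix.of (fun i j => if i = k ∨ j = k then 0 else R i j) with hA
    set B : Matrix (Fin p) (Fin p) ℝ :=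
      Matrix.of (fun i j => if i = k ∨ j = k then R i j else 0) with hB
    have key : ∀ t : ℝ, 0 < t →
        f A k k + t * f B k k = t * f R k k * t := by
      intro t ht
      set c : Fin p → ℝ := fun i => if i = k then t else 1 with hc
      have hcpos : ∀ i, 0 < c i := by
        intro i
        simp only [hc]
        split <;> [exact ht; norm_num]
      have hdecomp : A + t • B = Matrix.diagonal c * R * Matrix.diagonal c := by
        ext i j
        rw [Matrix.mul_diagonal, Matrix.diagonal_mul]
        simp only [Matrix.add_apply, Matrix.smul_apply, hA, hB, Matrix.of_apply,
          smul_eq_mul]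
        by_cases hi : i = k <;> by_cases hj : j = k <;>
          simp [hi, hj, hc, hRkk] <;> ring
      have h := hequiv c hcpos R hRsymm
      rw [← hdecomp, map_add, _root_.map_smul] at h
      have hkkentry := congrFun (congrFun h k) k
      simp only [Matrix.add_apply, Matrix.smul_apply, smul_eq_mul] at hkkentry
      rw [Matrix.mul_diagonal, Matrix.diagonal_mul] at hkkentry
      simpa [hc] using hkkentry
    have h1 := key 1 (by norm_num)
    have h2 := key 2 (by norm_num)
    have h3 := key 3 (by norm_num)
    linarith
  have hfR0 : f R = 0 := by
    ext i j
    by_cases hij : i = j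
    · subst hij
      simp [hkk i]
    · simp [hfRdiag hij]
  have : f S = f R + D := by
    rw [hfR]; abel
  rw [this, hfR0, zero_add]
end
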